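/- arXiv:math/0508341 — 3 statements merged into one kernel-verified Lean document; each statement's English description precedes it below -/
import Mathlib

section
/- Discrete Poincaré lemma for trivially star-shaped complexes: let V be a type, let K be a collection of finite subsets of V that is star-shaped with respect to a vertex w ∈ V, and let k ≥ 1. If α is a combinatorial k-cochain on V such that (dα)(τ) = 0 for every (k+2)-tuple τ lying in K, then for every (k+1)-tuple σ lying in K one has α(σ) = (d(Hα))(σ); that is, every cochain closed on K is, on K, the coboundary of its cocone Hα. -/
/-- The combinatorial coboundary of a cochain. -/
noncomputable def coboundary {V : Type*} {k : ℕ}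
    (α : (Fin k → V) → ℝ) : (Fin (k + 1) → V) → ℝ :=
  fun v => ∑ i : Fin (k + 1), ((-1 : ℝ) ^ (i : ℕ)) * α (fun j => v (i.succAbove j))

/-- The cocone operator with vertex `w`:
`(Hα)(v₀, …, v_{k-1}) = α(w, v₀, …, v_{k-1})`. -/
def cocone {V : Type*} (w : V) {k : ℕ}
    (α : (Fin (k + 1) → V) → ℝ) : (Fin k → V) → ℝ :=
  fun v => α (Fin.cons w v)

/-- Discrete Poincaré lemma for trivially star-shaped complexes: if `K` is a
collection of finite subsets of `V` that is star-shaped with respect to `w`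
(`s ∈ K → s ∪ {w} ∈ K`), `k ≥ 1`, and `α` is a `k`-cochain with `(dα)(τ) = 0`
for every `(k+2)`-tuple `τ` lying in `K`, then for every `(k+1)`-tuple `σ`
lying in `K`, `α(σ) = (d(Hα))(σ)`. -/
theorem discrete_poincare_lemma {V : Type*} [DecidableEq V]
    (w : V) (K : Set (Finset V)) (hK : ∀ s ∈ K, insert w s ∈ K)
    (k : ℕ) (hk : 1 ≤ k) (α : (Fin (k + 1) → V) → ℝ)
    (hclosed : ∀ τ : Fin (k + 2) → V,
      Finset.image τ Finset.univ ∈ K → coboundary α τ = 0) :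
    ∀ σ : Fin (k + 1) → V, Finset.image σ Finset.univ ∈ K →
      α σ = coboundary (cocone w α) σ := by
  intro σ hσ
  have himg : Finset.image (Fin.cons w σ : Fin (k + 2) → V) Finset.univ
      = insert w (Finset.image σ Finset.univ) := by
    ext x
    simp only [Finset.mem_image, Finset.mem_insert, Finset.mem_univ, true_and]
    constructor
    · rintro ⟨i, rfl⟩
      cases i using Fin.cases with
      | zero => left; simp
      | succ j => right; exact ⟨j, by simp⟩
    · rintro (rfl | ⟨j, rfl⟩)
      · exact ⟨0, rfl⟩
      · exact ⟨j.succ, by simp⟩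
  have h0 := hclosed (Fin.cons w σ) (himg ▸ hK _ hσ)
  unfold coboundary at h0 ⊢
  rw [Fin.sum_univ_succ] at h0
  have h1 : (fun j => (Fin.cons w σ : Fin (k + 2) → V) ((0 : Fin (k + 2)).succAbove j)) = σ := by
    funext j
    simp [Fin.succAbove_zero]
  have h2 : ∀ i : Fin (k + 1),
      (fun j => (Fin.cons w σ : Fin (k + 2) → V) (i.succ.succAbove j))
        = Fin.cons w (fun j => σ (i.succAbove j)) := by
    intro i
    funext j
    cases j using Fin.cases with
    | zero => simp [Fin.succ_succAbove_zero]
    | succ m => simp [Fin.succ_succAbove_succ]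
  rw [h1] at h0
  simp only [Fin.val_zero, pow_zero, one_mul, Fin.val_succ, pow_succ] at h0
  have : α σ + ∑ i : Fin (k + 1),
      (-1 : ℝ) ^ (i : ℕ) * -1 * cocone w α (fun j => σ (i.succAbove j)) = α σ + ∑ i : Fin (k + 1),
      (-1 : ℝ) ^ (i : ℕ) * -1 * α (fun j => (Fin.cons w σ : Fin (k + 2) → V) (i.succ.succAbove j)) := by
    congr 1
    refine Finset.sum_congr rfl fun i _ => ?_
    rw [h2 i]
    rfl
  rw [h0] at this
  have heq := this.symm
  have hS : ∑ i : Fin (k + 1), (-1 : ℝ) ^ (i : ℕ) * cocone w α (fun j => σ (i.succAbove j))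
      = -(∑ i : Fin (k + 1), (-1 : ℝ) ^ (i : ℕ) * -1 * cocone w α (fun j => σ (i.succAbove j))) := by
    rw [← Finset.sum_neg_distrib]
    exact Finset.sum_congr rfl fun i _ => by ring
  rw [hS]
  linarith
end

section
/- Anti-commutativity of the natural discrete wedge product: for every type V and all natural numbers k, l, if α is an alternating combinatorial k-cochain on V and β is an alternating combinatorial l-cochain on V, then α ∧ β = (−1)^{kl} · (β ∧ α) as (k+l)-cochains. -/
/-- A combinatorial `k`-cochain is alternating if permuting the entries of a
tuple multiplies the value by the sign of the permutation. -/
def IsAlternating {V : Type*} {k : ℕ} (α : (Fin (k + 1) → V) → ℝ) : Prop :=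
  ∀ (π : Equiv.Perm (Fin (k + 1))) (v : Fin (k + 1) → V),
    α (v ∘ π) = ((Equiv.Perm.sign π : ℤ) : ℝ) * α v

/-- The natural discrete wedge product of a `k`-cochain and an `l`-cochain:
`(α ∧ β)(v₀, …, v_{k+l}) = (1/(k+l+1)!) ∑_{τ ∈ S_{k+l+1}} sign(τ) ·
α(v_{τ(0)}, …, v_{τ(k)}) · β(v_{τ(k)}, …, v_{τ(k+l)})`. -/
noncomputable def wedge {V : Type*} {k l : ℕ}
    (α : (Fin (k + 1) → V) → ℝ) (β : (Fin (l + 1) → V) → ℝ) :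
    (Fin (k + l + 1) → V) → ℝ :=
  fun v => ((k + l + 1).factorial : ℝ)⁻¹ *
    ∑ τ : Equiv.Perm (Fin (k + l + 1)),
      ((Equiv.Perm.sign τ : ℤ) : ℝ) *
        (α (fun i : Fin (k + 1) => v (τ (Fin.castLE (by omega) i))) *
         β (fun j : Fin (l + 1) => v (τ ⟨k + (j : ℕ), by omega⟩)))

open Equiv Equiv.Perm

lemma sign_revPerm_aux : ∀ n : ℕ, sign (Fin.revPerm : Perm (Fin n)) = (-1) ^ (n * (n - 1) / 2)
  | 0 => by
    rw [Subsingleton.elim (Fin.revPerm : Perm (Fin 0)) 1]; simp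
  | (n + 1) => by
    have key : (Fin.revPerm : Perm (Fin (n + 1)))
        = finRotate (n + 1) *
          (finSuccEquivLast.symm.permCongr (Fin.revPerm : Perm (Fin n)).optionCongr) := by
      ext i
      refine Fin.lastCases ?_ (fun j => ?_) i
      · simp [Fin.rev_last, finRotate_succ_apply]
      · simp only [Perm.mul_apply, Equiv.permCongr_apply, Equiv.symm_symm,
          finSuccEquivLast_castSucc, Equiv.optionCongr_apply, Option.map_some,
          finSuccEquivLast_symm_some, Fin.revPerm_apply, finRotate_succ_apply]
        rw [Fin.rev_castSucc, Fin.coeSucc_eq_succ]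
    rw [key, map_mul, sign_finRotate, sign_permCongr, Equiv.optionCongr_sign,
      sign_revPerm_aux n, ← pow_add]
    congr 1
    rcases n with _ | p
    · rfl
    · obtain ⟨m, hm⟩ := Nat.even_mul_succ_self p
      have h1 : (p + 1) * (p + 1 - 1) = m + m := by rw [Nat.add_sub_cancel, mul_comm, hm]
      have h2 : (p + 1 + 1) * (p + 1 + 1 - 1) = m + m + 2 * (p + 1) := by
        have : (p + 2) * (p + 1) = p * (p + 1) + 2 * (p + 1) := by ring
        rw [Nat.add_sub_cancel, this, hm]
      omega


set_option maxHeartbeats 1000000 in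
/-- Anti-commutativity of the natural discrete wedge product:
`α ∧ β = (−1)^{kl} · (β ∧ α)` for alternating cochains. -/
theorem wedge_anticomm {V : Type*} {k l : ℕ}
    (α : (Fin (k + 1) → V) → ℝ) (β : (Fin (l + 1) → V) → ℝ)
    (hα : IsAlternating α) (hβ : IsAlternating β) :
    ∀ v : Fin (k + l + 1) → V,
      wedge α β v
        = ((-1 : ℝ) ^ (k * l)) *
            wedge β α (fun i => v (Fin.cast (by omega : l + k + 1 = k + l + 1) i)) := by
  intro v
  have h : l + k + 1 = k + l + 1 := by omega
  show wedge α β v = ((-1 : ℝ) ^ (k * l)) * wedge β α (fun i => v (Fin.cast h i))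
  let e : Fin (k + l + 1) ≃ Fin (l + k + 1) := finCongr h.symm
  let Φ : Perm (Fin (k + l + 1)) ≃ Perm (Fin (l + k + 1)) :=
    (Equiv.mulRight (Fin.revPerm : Perm (Fin (k + l + 1)))).trans e.permCongr
  -- combined sign
  have hsign : ((-1 : ℝ) ^ (k * l)) *
      ((((sign (Fin.revPerm : Perm (Fin (k + l + 1))) : ℤ) : ℝ)) *
       ((((sign (Fin.revPerm : Perm (Fin (l + 1))) : ℤ) : ℝ)) *
        (((sign (Fin.revPerm : Perm (Fin (k + 1))) : ℤ) : ℝ)))) = 1 := by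
    rw [sign_revPerm_aux, sign_revPerm_aux, sign_revPerm_aux]
    push_cast
    rw [← pow_add, ← pow_add, ← pow_add]
    refine Even.neg_one_pow ?_
    obtain ⟨a, ha⟩ := Nat.even_mul_succ_self k
    obtain ⟨b, hb⟩ := Nat.even_mul_succ_self l
    obtain ⟨c, hc⟩ := Nat.even_mul_succ_self (k + l)
    have e1 : (k + 1) * k / 2 = a := by rw [mul_comm, ha]; omega
    have e2 : (l + 1) * l / 2 = b := by rw [mul_comm, hb]; omega
    have e3 : (k + l + 1) * (k + l) / 2 = c := by rw [mul_comm, hc]; omega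
    obtain ⟨m, hm⟩ : ∃ m, m = k * l := ⟨_, rfl⟩
    have hsum : c + c = (a + a) + ((b + b) + 2 * m) := by
      rw [hm, ← ha, ← hb, ← hc]; ring
    rw [e1, e2, e3, ← hm]
    exact ⟨m + b + a, by omega⟩
  have key : ∀ τ : Perm (Fin (k + l + 1)),
      ((Equiv.Perm.sign τ : ℤ) : ℝ) *
        (α (fun i : Fin (k + 1) => v (τ (Fin.castLE (by omega) i))) *
         β (fun j : Fin (l + 1) => v (τ ⟨k + (j : ℕ), by omega⟩)))
      = ((-1 : ℝ) ^ (k * l)) *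
        (((Equiv.Perm.sign (Φ τ) : ℤ) : ℝ) *
          (β (fun i : Fin (l + 1) =>
              (fun i => v (Fin.cast h i)) ((Φ τ) (Fin.castLE (by omega) i))) *
           α (fun j : Fin (k + 1) =>
              (fun i => v (Fin.cast h i)) ((Φ τ) ⟨l + (j : ℕ), by omega⟩)))) := by
    intro τ
    have happ : ∀ x : Fin (l + k + 1), Fin.cast h (Φ τ x) = τ (Fin.rev (finCongr h x)) := by
      intro x
      rfl
    have hB : (fun i : Fin (l + 1) =>
        (fun i => v (Fin.cast h i)) ((Φ τ) (Fin.castLE (by omega) i)))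
        = (fun j : Fin (l + 1) => v (τ ⟨k + (j : ℕ), by omega⟩)) ∘ (Fin.revPerm : Perm (Fin (l+1))) := by
      funext i
      show v (Fin.cast h (Φ τ (Fin.castLE (by omega) i))) = _
      rw [happ]
      show _ = v (τ ⟨k + ((Fin.rev i : Fin (l+1)) : ℕ), by omega⟩)
      congr 2
      ext
      simp [Fin.val_rev]
      omega
    have hA : (fun j : Fin (k + 1) =>
        (fun i => v (Fin.cast h i)) ((Φ τ) ⟨l + (j : ℕ), by omega⟩))
        = (fun i : Fin (k + 1) => v (τ (Fin.castLE (by omega) i))) ∘ (Fin.revPerm : Perm (Fin (k+1))) := by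
      funext i
      show v (Fin.cast h (Φ τ ⟨l + (i : ℕ), by omega⟩)) = _
      rw [happ]
      show _ = v (τ (Fin.castLE (by omega) (Fin.rev i)))
      congr 2
      ext
      simp [Fin.val_rev]
      omega
    have hsΦ : ((Equiv.Perm.sign (Φ τ) : ℤ) : ℝ)
        = ((Equiv.Perm.sign τ : ℤ) : ℝ) *
          (((sign (Fin.revPerm : Perm (Fin (k + l + 1))) : ℤ) : ℝ)) := by
      have hΦτ : Φ τ = Equiv.permCongr e (τ * (Fin.revPerm : Perm (Fin (k + l + 1)))) := rfl
      rw [hΦτ, sign_permCongr, map_mul]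
      push_cast
      ring
    rw [hB, hA, hβ, hα, hsΦ]
    calc ((Equiv.Perm.sign τ : ℤ) : ℝ) *
        (α (fun i : Fin (k + 1) => v (τ (Fin.castLE (by omega) i))) *
         β (fun j : Fin (l + 1) => v (τ ⟨k + (j : ℕ), by omega⟩)))
        = (((-1 : ℝ) ^ (k * l)) *
      ((((sign (Fin.revPerm : Perm (Fin (k + l + 1))) : ℤ) : ℝ)) *
       ((((sign (Fin.revPerm : Perm (Fin (l + 1))) : ℤ) : ℝ)) *
        (((sign (Fin.revPerm : Perm (Fin (k + 1))) : ℤ) : ℝ))))) *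
        (((Equiv.Perm.sign τ : ℤ) : ℝ) *
        (α (fun i : Fin (k + 1) => v (τ (Fin.castLE (by omega) i))) *
         β (fun j : Fin (l + 1) => v (τ ⟨k + (j : ℕ), by omega⟩)))) := by
          rw [hsign, one_mul]
      _ = _ := by ring
  unfold wedge
  have hM : (((l + k + 1).factorial : ℕ) : ℝ) = (((k + l + 1).factorial : ℕ) : ℝ) := by rw [h]
  rw [hM, ← Equiv.sum_comp Φ, Finset.sum_congr rfl (fun τ _ => key τ), ← Finset.mul_sum]
  ring
end

section
/- Leibniz rule for the natural discrete wedge product: for every type V and all natural numbers k, l, if α is an alternating combinatorial k-cochain on V and β is an alternating combinatorial l-cochain on V, then d(α ∧ β) = (dα) ∧ β + (−1)^k · α ∧ (dβ) as (k+l+1)-cochains. -/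
/-!
The wedge is the antisymmetrization of the cup product
`(α ⌣ β)(v₀, …, v_{k+l}) = α(v₀, …, v_k) · β(v_k, …, v_{k+l})`, so it suffices that
antisymmetrization commutes with `d` and that `⌣` satisfies the Leibniz rule.

For the first, write a permutation of `Fin (n + 2)` as its value `i` at `0` together with a
permutation `τ` of the remaining letters, placed through `i.succAbove`; its sign is
`(-1)ⁱ · sign τ`. Then every face `j` of `Alt(dγ)` contributes the same signed sum, which is also
`d(Alt γ)` up to the factor `n + 2` absorbed by the factorials.

For the second, the faces of `α ⌣ β` omitting a vertex `v_i` with `i ≤ k` give `dα ⌣ β`, those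
with `i > k` give `(-1)ᵏ α ⌣ dβ`, and the two leftover terms (the last face of `dα` and the first
face of `dβ`) cancel.
-/

open Equiv Equiv.Perm Finset

section Alternatization

variable {V : Type*} {n : ℕ}

noncomputable def alternatization : Module.End ℝ ((Fin (n + 1) → V) → ℝ) where
  toFun γ v := ((n + 1).factorial : ℝ)⁻¹ *
    ∑ τ : Perm (Fin (n + 1)), ((sign τ : ℤ) : ℝ) * γ (fun i => v (τ i))
  map_add' γ δ := by
    funext v
    simp only [Pi.add_apply, mul_add, sum_add_distrib]
  map_smul' c γ := by
    funext v
    simp only [Pi.smul_apply, smul_eq_mul, RingHom.id_apply, mul_sum]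
    exact sum_congr rfl fun τ _ => by ring

theorem alternatization_apply (γ : (Fin (n + 1) → V) → ℝ) (v : Fin (n + 1) → V) :
    alternatization γ v = ((n + 1).factorial : ℝ)⁻¹ *
      ∑ τ : Perm (Fin (n + 1)), ((sign τ : ℤ) : ℝ) * γ (fun i => v (τ i)) :=
  rfl

end Alternatization

namespace Fin

variable {n : ℕ}

def succAbovePerm (i : Fin (n + 1)) (τ : Perm (Fin n)) : Perm (Fin (n + 1)) :=
  (cycleRange i)⁻¹ * decomposeFin.symm (0, τ)

@[simp]
theorem succAbovePerm_apply_zero (i : Fin (n + 1)) (τ : Perm (Fin n)) :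
    succAbovePerm i τ 0 = i := by
  simp [succAbovePerm, Perm.inv_def]

@[simp]
theorem succAbovePerm_apply_succ (i : Fin (n + 1)) (τ : Perm (Fin n)) (b : Fin n) :
    succAbovePerm i τ b.succ = i.succAbove (τ b) := by
  simp [succAbovePerm, Perm.inv_def]

theorem sign_succAbovePerm (i : Fin (n + 1)) (τ : Perm (Fin n)) :
    sign (succAbovePerm i τ) = (-1) ^ (i : ℕ) * sign τ := by
  simp [succAbovePerm, sign_cycleRange]

theorem bijective_succAbovePerm :
    Function.Bijective fun p : Fin (n + 1) × Perm (Fin n) => succAbovePerm p.1 p.2 := by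
  rw [Fintype.bijective_iff_injective_and_card]
  refine ⟨?_, by simp [Fintype.card_perm, Nat.factorial_succ]⟩
  rintro ⟨i, τ⟩ ⟨i', τ'⟩ h
  obtain rfl : i = i' := by simpa using congr($h 0)
  obtain rfl : τ = τ' := Equiv.ext fun b => by simpa using congr($h b.succ)
  rfl

theorem val_succAbove (p : Fin (n + 1)) (i : Fin n) :
    (p.succAbove i : ℕ) = if (i : ℕ) < p then (i : ℕ) else (i : ℕ) + 1 := by
  simp only [succAbove, lt_def, val_castSucc]
  split_ifs <;> simp

theorem sum_univ_add_of_eq {M : Type*} [AddCommMonoid M] {a b : ℕ} (h : a + b = n)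
    (f : Fin n → M) :
    ∑ x, f x = ∑ i : Fin a, f ⟨i, by omega⟩ + ∑ j : Fin b, f ⟨a + j, by omega⟩ := by
  subst h
  exact sum_univ_add f

end Fin

section Coboundary

variable {V : Type*} {n : ℕ}

theorem sum_sign_mul_comp_succAbove (γ : (Fin (n + 1) → V) → ℝ) (v : Fin (n + 2) → V)
    (j : Fin (n + 2)) :
    ∑ σ : Perm (Fin (n + 2)),
        ((sign σ : ℤ) : ℝ) * ((-1) ^ (j : ℕ) * γ (fun b => v (σ (j.succAbove b))))
      = ∑ σ : Perm (Fin (n + 2)), ((sign σ : ℤ) : ℝ) * γ (fun b => v (σ b.succ)) := by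
  -- `cycleRange j` maps `j.succAbove b` to `b.succ` and has sign `(-1) ^ j`
  rw [← Equiv.sum_comp (Equiv.mulRight (Fin.cycleRange j))]
  refine sum_congr rfl fun σ _ => ?_
  have hsq : (-1 : ℝ) ^ (j : ℕ) * (-1) ^ (j : ℕ) = 1 := by rw [← mul_pow]; simp
  simp only [coe_mulRight, Perm.mul_apply, Fin.cycleRange_succAbove, map_mul,
    Fin.sign_cycleRange]
  push_cast
  linear_combination (((sign σ : ℤ) : ℝ) * γ (fun b => v (σ b.succ))) * hsq

theorem sum_sign_mul_comp_succ (γ : (Fin (n + 1) → V) → ℝ) (v : Fin (n + 2) → V) :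
    ∑ σ : Perm (Fin (n + 2)), ((sign σ : ℤ) : ℝ) * γ (fun b => v (σ b.succ))
      = ∑ i : Fin (n + 2), (-1) ^ (i : ℕ) *
          ∑ τ : Perm (Fin (n + 1)), ((sign τ : ℤ) : ℝ) * γ (fun b => v (i.succAbove (τ b))) := by
  rw [← Fintype.sum_bijective _ Fin.bijective_succAbovePerm _ _ fun _ => rfl,
    Fintype.sum_prod_type]
  refine sum_congr rfl fun i _ => ?_
  simp only [mul_sum, Fin.succAbovePerm_apply_succ, Fin.sign_succAbovePerm]
  push_cast
  simp only [mul_assoc]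

theorem coboundary_alternatization (γ : (Fin (n + 1) → V) → ℝ) :
    coboundary (alternatization γ) = alternatization (coboundary γ) := by
  funext v
  have hfac : ((n + 2).factorial : ℝ)⁻¹ * (n + 2) = ((n + 1).factorial : ℝ)⁻¹ := by
    rw [Nat.factorial_succ]
    push_cast
    field_simp
    ring
  calc coboundary (alternatization γ) v
      = ((n + 1).factorial : ℝ)⁻¹ *
          ∑ σ : Perm (Fin (n + 2)), ((sign σ : ℤ) : ℝ) * γ (fun b => v (σ b.succ)) := by
        simp only [coboundary, alternatization_apply, sum_sign_mul_comp_succ, mul_sum]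
        exact sum_congr rfl fun i _ => sum_congr rfl fun τ _ => by ring
    _ = ((n + 2).factorial : ℝ)⁻¹ * ∑ j : Fin (n + 2), ∑ σ : Perm (Fin (n + 2)),
          ((sign σ : ℤ) : ℝ) * ((-1) ^ (j : ℕ) * γ (fun b => v (σ (j.succAbove b)))) := by
        simp only [sum_sign_mul_comp_succAbove, sum_const, card_univ, Fintype.card_fin,
          nsmul_eq_mul, ← hfac]
        push_cast
        ring
    _ = alternatization (coboundary γ) v := by
        simp only [alternatization_apply, coboundary, mul_sum]
        rw [sum_comm]

end Coboundary

section Cup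

variable {V : Type*} {k l m : ℕ}

-- Allowing any `m` with `k + l = m` keeps `coboundary_cup` free of `Fin.cast`.
noncomputable def cup (h : k + l = m) (α : (Fin (k + 1) → V) → ℝ)
    (β : (Fin (l + 1) → V) → ℝ) : (Fin (m + 1) → V) → ℝ :=
  fun v => α (fun i => v ⟨i, by omega⟩) * β (fun j => v ⟨k + j, by omega⟩)

theorem coboundary_cup (h : k + l = m) (α : (Fin (k + 1) → V) → ℝ)
    (β : (Fin (l + 1) → V) → ℝ) :
    coboundary (cup h α β) = cup (by omega : k + 1 + l = m + 1) (coboundary α) β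
      + (-1 : ℝ) ^ k • cup (by omega : k + (l + 1) = m + 1) α (coboundary β) := by
  funext v
  subst h
  simp only [coboundary, cup, Pi.add_apply, Pi.smul_apply, smul_eq_mul]
  rw [Fin.sum_univ_add_of_eq (by omega : k + 1 + (l + 1) = k + l + 1 + 1),
    Fin.sum_univ_castSucc (n := k + 1), Fin.sum_univ_succ (n := l + 1)]
  simp only [Fin.val_castSucc, Fin.val_succ, Fin.val_last, Fin.val_zero, Fin.succAbove_last,
    Fin.succAbove_zero, pow_zero, one_mul]
  have hfront : ∑ x : Fin (k + 1), (-1 : ℝ) ^ (x : ℕ) *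
        ((α fun i => v ((⟨x, by omega⟩ : Fin (k + l + 1 + 1)).succAbove ⟨i, by omega⟩)) *
          β fun j => v ((⟨x, by omega⟩ : Fin (k + l + 1 + 1)).succAbove ⟨k + j, by omega⟩))
      = (∑ x : Fin (k + 1), (-1) ^ (x : ℕ) *
          α fun i => v ⟨x.castSucc.succAbove i, by omega⟩) * β fun j => v ⟨k + 1 + j, by omega⟩ := by
    rw [sum_mul]
    refine sum_congr rfl fun x _ => ?_
    rw [mul_assoc]
    congr! 5 with i j
    · ext
      simp only [Fin.val_succAbove, Fin.val_castSucc]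
    · ext
      simp only [Fin.val_succAbove]
      split_ifs <;> omega
  have hback : ∑ x : Fin (l + 1), (-1 : ℝ) ^ (k + 1 + x) *
        ((α fun i => v ((⟨k + 1 + x, by omega⟩ : Fin (k + l + 1 + 1)).succAbove ⟨i, by omega⟩)) *
          β fun j => v ((⟨k + 1 + x, by omega⟩ : Fin (k + l + 1 + 1)).succAbove ⟨k + j, by omega⟩))
      = (-1) ^ k * ((α fun i => v ⟨i, by omega⟩) * ∑ x : Fin (l + 1), (-1) ^ ((x : ℕ) + 1) *
          β fun j => v ⟨k + x.succ.succAbove j, by omega⟩) := by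
    rw [mul_sum, mul_sum]
    refine sum_congr rfl fun x _ => ?_
    rw [show (-1 : ℝ) ^ (k + 1 + (x : ℕ)) = (-1) ^ k * (-1) ^ ((x : ℕ) + 1) by ring,
      mul_assoc, mul_left_comm (α _)]
    congr! 6 <;>
    · ext
      simp only [Fin.val_succAbove, Fin.val_succ]
      split_ifs <;> omega
  have hcorner : (β fun j => v ⟨k + (j + 1), by omega⟩) = β fun j => v ⟨k + 1 + j, by omega⟩ := by
    congr! 3
    rw [Fin.mk.injEq]
    omega
  rw [hfront, hback, hcorner]
  ring

theorem wedge_eq_alternatization_cup (α : (Fin (k + 1) → V) → ℝ) (β : (Fin (l + 1) → V) → ℝ) :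
    wedge α β = alternatization (cup rfl α β) :=
  rfl

theorem wedge_comp_cast (h : k + l = m) (α : (Fin (k + 1) → V) → ℝ)
    (β : (Fin (l + 1) → V) → ℝ) (v : Fin (m + 1) → V) :
    wedge α β (fun i => v (Fin.cast (by omega) i)) = alternatization (cup h α β) v := by
  subst h
  rfl

end Cup

/-- Leibniz rule for the natural discrete wedge product:
`d(α ∧ β) = (dα) ∧ β + (−1)ᵏ · α ∧ (dβ)` for alternating cochains. -/
theorem wedge_leibniz {V : Type*} {k l : ℕ}
    (α : (Fin (k + 1) → V) → ℝ) (β : (Fin (l + 1) → V) → ℝ) :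
    ∀ v : Fin (k + l + 1 + 1) → V,
      coboundary (wedge α β) v
        = wedge (coboundary α) β
            (fun i => v (Fin.cast (by omega : k + 1 + l + 1 = k + l + 1 + 1) i))
          + ((-1 : ℝ) ^ k) * wedge α (coboundary β) v := by
  intro v
  rw [wedge_eq_alternatization_cup, coboundary_alternatization, coboundary_cup, map_add, map_smul,
    wedge_comp_cast (by omega : k + 1 + l = k + l + 1), wedge_eq_alternatization_cup]
  rfl
end
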